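/- arXiv:1711.10843 — 3 statements merged into one kernel-verified Lean document; each statement's English description precedes it below -/
import Mathlib

section
/- Tartar's function f(x) = ((3/x³)(sin x - x cos x))² satisfies f(x) ≤ 1 for all x > 0. -/
/-! Since `d/dt (sin t - t cos t) = t sin t` and `|t sin t| ≤ t²`, the numerator
`sin x - x cos x` is bounded in absolute value by `∫₀^|x| t² dt = |x|³ / 3`. -/

open Real

lemma hasDerivAt_sin_sub_mul_cos (t : ℝ) :
    HasDerivAt (fun t => sin t - t * cos t) (t * sin t) t := by
  have h := (hasDerivAt_sin t).sub ((hasDerivAt_id t).mul (hasDerivAt_cos t))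
  exact h.congr_deriv (by simp)

lemma abs_mul_sin_le_sq (t : ℝ) : |t * sin t| ≤ t ^ 2 := by
  rw [abs_mul, sq, ← abs_mul_abs_self t]
  exact mul_le_mul_of_nonneg_left abs_sin_le_abs (abs_nonneg t)

lemma abs_sin_sub_mul_cos_le_of_nonneg {x : ℝ} (hx : 0 ≤ x) :
    |sin x - x * cos x| ≤ x ^ 3 / 3 := by
  have hB : ∀ t : ℝ, HasDerivAt (fun t => t ^ 3 / 3) (t ^ 2) t := fun t => by
    simpa using (hasDerivAt_pow 3 t).div_const 3
  exact image_norm_le_of_norm_deriv_right_le_deriv_boundary (a := 0) (b := x)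
    (f' := fun t => t * sin t) (by fun_prop)
    (fun t _ => (hasDerivAt_sin_sub_mul_cos t).hasDerivWithinAt) (by simp) hB
    (fun t _ => abs_mul_sin_le_sq t) ⟨hx, le_rfl⟩

lemma abs_sin_sub_mul_cos_le (x : ℝ) : |sin x - x * cos x| ≤ |x| ^ 3 / 3 := by
  rcases le_total 0 x with hx | hx
  · rw [abs_of_nonneg hx]
    exact abs_sin_sub_mul_cos_le_of_nonneg hx
  · have h := abs_sin_sub_mul_cos_le_of_nonneg (neg_nonneg.mpr hx)
    rw [sin_neg, cos_neg, ← abs_neg] at h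
    rw [abs_of_nonpos hx]
    convert h using 2
    ring

theorem stmt_2 (x : ℝ) (hx : 0 < x) :
    ((3 / x ^ 3) * (Real.sin x - x * Real.cos x)) ^ 2 ≤ 1 := by
  rw [sq_le_one_iff_abs_le_one, abs_mul, abs_of_pos (by positivity : 0 < 3 / x ^ 3)]
  calc 3 / x ^ 3 * |sin x - x * cos x| ≤ 3 / x ^ 3 * (|x| ^ 3 / 3) := by
        gcongr
        exact abs_sin_sub_mul_cos_le x
    _ = 1 := by rw [abs_of_pos hx]; field_simp
end

section
/- Let α be an algebraic integer of degree n with conjugates α₁,…,αₙ satisfying Σᵢ |αᵢ|² ≤ T and Σᵢ αᵢ = S₁ ∈ ℝ. If p is the minimal polynomial of α, then |p(1)| ≤ ((T - 2S₁)/n + 1)^{n/2} and |p(-1)| ≤ ((T + 2S₁)/n + 1)^{n/2}. -/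
open Polynomial

/-! Evaluating `∏ (X - αᵢ)` at `c = ±1` gives `∏ |c - αᵢ|`, and AM-GM applied to the squares
`|c - αᵢ|² = 1 - 2c Re αᵢ + |αᵢ|²` bounds it by `((∑ |c - αᵢ|²) / n) ^ (n / 2)`, where
`∑ |c - αᵢ|² = n - 2c S₁ + ∑ |αᵢ|² ≤ n - 2c S₁ + T`. -/

theorem Real.prod_le_rpow_of_sum_sq_le {ι : Type*} [Fintype ι] {a : ι → ℝ} (ha : ∀ i, 0 ≤ a i)
    {B : ℝ} (hB : ∑ i, a i ^ 2 ≤ Fintype.card ι * B) :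
    ∏ i, a i ≤ B ^ ((Fintype.card ι : ℝ) / 2) := by
  rcases isEmpty_or_nonempty ι with hι | hι
  · simp
  set n : ℝ := (Fintype.card ι : ℝ)
  have hn : 0 < n := by positivity
  have hB₀ : 0 ≤ B := by
    have : 0 ≤ ∑ i, a i ^ 2 := by positivity
    nlinarith
  have hgm : (∏ i, (a i ^ 2) ^ (1 : ℝ)) ^ n⁻¹ ≤ B := by
    have := geom_mean_le_arith_mean Finset.univ (fun _ ↦ 1) (fun i ↦ a i ^ 2)
      (fun _ _ ↦ zero_le_one) (by simpa using Fintype.card_pos) (fun i _ ↦ sq_nonneg (a i))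
    simp only [Finset.sum_const, Finset.card_univ, nsmul_eq_mul, mul_one, one_mul] at this
    exact this.trans (by rwa [div_le_iff₀' hn])
  calc ∏ i, a i = ((∏ i, (a i ^ 2) ^ (1 : ℝ)) ^ n⁻¹) ^ (n / 2) := by
        simp only [Real.rpow_one, Finset.prod_pow]
        rw [← Real.rpow_mul (by positivity), ← Real.rpow_natCast, ← Real.rpow_mul
          (Finset.prod_nonneg fun i _ ↦ ha i)]
        rw [show ((2 : ℕ) : ℝ) * (n⁻¹ * (n / 2)) = 1 by field_simp; norm_num, Real.rpow_one]
    _ ≤ B ^ (n / 2) := Real.rpow_le_rpow (by positivity) hgm (by positivity)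

theorem Complex.norm_ofReal_sub_sq (c : ℝ) (z : ℂ) :
    ‖(c : ℂ) - z‖ ^ 2 = c ^ 2 - 2 * c * z.re + ‖z‖ ^ 2 := by
  simp only [Complex.sq_norm, Complex.normSq_apply, Complex.sub_re, Complex.sub_im,
    Complex.ofReal_re, Complex.ofReal_im]
  ring

theorem norm_eval_prod_X_sub_C_ofReal_le {ι : Type*} [Fintype ι] (w : ι → ℂ) (c : ℝ) {T S : ℝ}
    (hT : ∑ i, ‖w i‖ ^ 2 ≤ T) (hS : (∑ i, w i).re = S) :
    ‖(∏ i, (X - C (w i))).eval (c : ℂ)‖ ≤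
      ((T - 2 * c * S) / Fintype.card ι + c ^ 2) ^ ((Fintype.card ι : ℝ) / 2) := by
  rw [eval_prod, norm_prod]
  refine Real.prod_le_rpow_of_sum_sq_le (fun i ↦ norm_nonneg _) ?_
  rcases isEmpty_or_nonempty ι with hι | hι
  · simp
  have hn : (Fintype.card ι : ℝ) ≠ 0 := by positivity
  have hsum : ∑ i, ‖eval (c : ℂ) (X - C (w i))‖ ^ 2
      = Fintype.card ι * c ^ 2 - 2 * c * S + ∑ i, ‖w i‖ ^ 2 := by
    simp only [eval_sub, eval_X, eval_C, Complex.norm_ofReal_sub_sq, Finset.sum_add_distrib,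
      Finset.sum_sub_distrib, ← Finset.mul_sum, ← Complex.re_sum, hS, Finset.sum_const,
      Finset.card_univ, nsmul_eq_mul]
  rw [hsum, mul_add, mul_div_cancel₀ _ hn]
  linarith

theorem stmt_9_general (α : ℂ) (n : ℕ) (conj : Fin n → ℂ)
    (hconj : (minpoly ℚ α).map (algebraMap ℚ ℂ) = ∏ i : Fin n, (X - C (conj i)))
    (T : ℝ) (hT : ∑ i : Fin n, ‖conj i‖ ^ 2 ≤ T)
    (S₁ : ℝ) (hS : (∑ i : Fin n, conj i) = (S₁ : ℂ)) :
    ‖((minpoly ℚ α).map (algebraMap ℚ ℂ)).eval 1‖ ≤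
        ((T - 2 * S₁) / n + 1) ^ ((n : ℝ) / 2) ∧
      ‖((minpoly ℚ α).map (algebraMap ℚ ℂ)).eval (-1)‖ ≤
        ((T + 2 * S₁) / n + 1) ^ ((n : ℝ) / 2) := by
  have hS_re : (∑ i, conj i).re = S₁ := by rw [hS, Complex.ofReal_re]
  have bound (c : ℝ) := norm_eval_prod_X_sub_C_ofReal_le conj c hT hS_re
  rw [Fintype.card_fin] at bound
  rw [hconj]
  constructor
  · simpa using bound 1
  · simpa using bound (-1)

theorem stmt_9 (α : ℂ) (hint : IsIntegral ℤ α) (n : ℕ) (hn : 1 ≤ n)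
    (hdeg : (minpoly ℚ α).natDegree = n) (conj : Fin n → ℂ)
    (hconj : (minpoly ℚ α).map (algebraMap ℚ ℂ) = ∏ i : Fin n, (X - C (conj i)))
    (T : ℝ) (hT : ∑ i : Fin n, ‖conj i‖ ^ 2 ≤ T)
    (S₁ : ℝ) (hS : (∑ i : Fin n, conj i) = (S₁ : ℂ)) :
    ‖((minpoly ℚ α).map (algebraMap ℚ ℂ)).eval 1‖ ≤
        ((T - 2 * S₁) / n + 1) ^ ((n : ℝ) / 2) ∧
      ‖((minpoly ℚ α).map (algebraMap ℚ ℂ)).eval (-1)‖ ≤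
        ((T + 2 * S₁) / n + 1) ^ ((n : ℝ) / 2) :=
  stmt_9_general α n conj hconj T hT S₁ hS
end

section
/- (Pohst) Fix n ≥ 1, T > 0, N > 0 with N ≤ (T/n)^{n/2}, and m ∈ ℤ \ {0, 2}. Any point (y₁,…,yₙ) at which T_m(x) = Σᵢ xᵢ^m attains its maximum on the set {x ∈ ℝⁿ : Σᵢ xᵢ² ≤ T, ∏ᵢ xᵢ = N, xᵢ > 0} has at most two distinct coordinate values. -/
/-!
Suppose `y` took three values `a < b < c`. Then the rows `(1, t², t ^ m)`, `t ∈ {a, b, c}`, are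
linearly independent: if `k + l t² + u t ^ m` vanished at all three, Rolle would give two distinct
positive zeros of `2 l + m u t ^ (m - 2)`, forcing `u = 0` (as `t ↦ t ^ (m - 2)` is injective on
`(0, ∞)` for `m ≠ 2`) and then `l = k = 0`. So there is a direction `v` with `∑ vᵢ = 0`,
`∑ vᵢ yᵢ² < 0` and `m ∑ vᵢ yᵢ ^ m > 0`. For small `s > 0` the point `xᵢ = yᵢ e ^ (s vᵢ)` has the same
product as `y`, a smaller `∑ xᵢ²` and a larger `∑ xᵢ ^ m`, contradicting maximality.
-/

open Filter Topology Real

theorem Set.exists_lt_lt_of_two_lt_ncard {α : Type*} [LinearOrder α] {s : Set α} (hs : s.Finite)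
    (h : 2 < s.ncard) : ∃ a ∈ s, ∃ b ∈ s, ∃ c ∈ s, a < b ∧ b < c := by
  rw [ncard_eq_toFinset_card s hs] at h
  let e := hs.toFinset.orderEmbOfFin rfl
  have he : ∀ i, e i ∈ s := fun i => hs.mem_toFinset.1 (Finset.orderEmbOfFin_mem _ _ i)
  exact ⟨e ⟨0, by omega⟩, he _, e ⟨1, by omega⟩, he _, e ⟨2, by omega⟩, he _,
    e.strictMono (by simp [Fin.lt_def]), e.strictMono (by simp [Fin.lt_def])⟩

theorem eq_zero_of_three_pos_roots {m : ℤ} (hm0 : m ≠ 0) (hm2 : m ≠ 2) {k l u a b c : ℝ}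
    (ha : 0 < a) (hab : a < b) (hbc : b < c) (hra : k + l * a ^ 2 + u * a ^ m = 0)
    (hrb : k + l * b ^ 2 + u * b ^ m = 0) (hrc : k + l * c ^ 2 + u * c ^ m = 0) :
    k = 0 ∧ l = 0 ∧ u = 0 := by
  set φ : ℝ → ℝ := fun t => k + l * t ^ 2 + u * t ^ m
  have hderiv : ∀ t, 0 < t → HasDerivAt φ (t * (2 * l + m * u * t ^ (m - 2))) t := by
    intro t ht
    have hφ := (((hasDerivAt_pow 2 t).const_mul l).const_add k).fun_add
      ((hasDerivAt_zpow m t (Or.inl ht.ne')).const_mul u)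
    refine hφ.congr_deriv ?_
    rw [show m - 1 = m - 2 + 1 by ring, zpow_add_one₀ ht.ne']
    push_cast
    ring
  have hcont : ∀ x y, 0 < x → ContinuousOn φ (Set.Icc x y) := fun x y hx t ht =>
    (hderiv t (hx.trans_le ht.1)).continuousAt.continuousWithinAt
  obtain ⟨t₁, ht₁, hcrit₁⟩ := exists_hasDerivAt_eq_zero hab (hcont a b ha) (hra.trans hrb.symm)
    fun t ht => hderiv t (ha.trans ht.1)
  obtain ⟨t₂, ht₂, hcrit₂⟩ := exists_hasDerivAt_eq_zero hbc (hcont b c (ha.trans hab))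
    (hrb.trans hrc.symm) fun t ht => hderiv t (ha.trans (hab.trans ht.1))
  have ht₁0 : 0 < t₁ := ha.trans ht₁.1
  have ht₂0 : 0 < t₂ := ht₁0.trans (ht₁.2.trans ht₂.1)
  replace hcrit₁ := (mul_eq_zero.1 hcrit₁).resolve_left ht₁0.ne'
  replace hcrit₂ := (mul_eq_zero.1 hcrit₂).resolve_left ht₂0.ne'
  have hpow : t₁ ^ (m - 2) ≠ t₂ ^ (m - 2) := by
    rw [Ne, zpow_left_inj₀ ht₁0.le ht₂0.le (sub_ne_zero.2 hm2)]
    exact (ht₁.2.trans ht₂.1).ne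
  have hu : u = 0 := by
    have : (m : ℝ) * u * (t₁ ^ (m - 2) - t₂ ^ (m - 2)) = 0 := by linear_combination hcrit₁ - hcrit₂
    simpa [hm0, sub_eq_zero, hpow] using this
  have hl : l = 0 := by simpa [hu] using hcrit₁
  exact ⟨by simpa [hu, hl] using hra, hl, hu⟩

theorem det_one_sq_zpow_ne_zero {m : ℤ} (hm0 : m ≠ 0) (hm2 : m ≠ 2) {a b c : ℝ}
    (ha : 0 < a) (hab : a < b) (hbc : b < c) :
    (!![1, a ^ 2, a ^ m; 1, b ^ 2, b ^ m; 1, c ^ 2, c ^ m] : Matrix (Fin 3) (Fin 3) ℝ).det ≠ 0 := by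
  intro hdet
  obtain ⟨w, hw0, hw⟩ := Matrix.exists_mulVec_eq_zero_iff.2 hdet
  have hroot := congrFun hw
  simp only [Matrix.mulVec, dotProduct, Matrix.of_apply, Matrix.cons_val', Matrix.cons_val_fin_one,
    Fin.sum_univ_three, Matrix.cons_val_zero, Matrix.cons_val_one, Matrix.cons_val, Pi.zero_apply,
    Fin.forall_fin_succ, one_mul, Matrix.cons_val_succ, forall_const] at hroot
  obtain ⟨hra, hrb, hrc⟩ := hroot
  obtain ⟨h0, h1, h2⟩ := eq_zero_of_three_pos_roots (k := w 0) (l := w 1) (u := w 2) hm0 hm2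
    ha hab hbc (by linear_combination hra) (by linear_combination hrb) (by linear_combination hrc)
  exact hw0 (by ext i; fin_cases i <;> simp [h0, h1, h2])

theorem exists_sum_eq_of_lt {ι : Type*} [Fintype ι] [DecidableEq ι] {m : ℤ} (hm0 : m ≠ 0)
    (hm2 : m ≠ 2) {y : ι → ℝ} {p q r : ι} (hp : 0 < y p) (hpq : y p < y q) (hqr : y q < y r)
    (d₀ d₁ d₂ : ℝ) :
    ∃ v : ι → ℝ, ∑ i, v i = d₀ ∧ ∑ i, v i * y i ^ 2 = d₁ ∧ ∑ i, v i * y i ^ m = d₂ := by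
  obtain ⟨w, hw⟩ := Matrix.vecMul_surjective_iff_isUnit.2 ((Matrix.isUnit_iff_isUnit_det _).2
    (det_one_sq_zpow_ne_zero hm0 hm2 hp hpq hqr).isUnit) ![d₀, d₁, d₂]
  let v : ι → ℝ := Pi.single p (w 0) + Pi.single q (w 1) + Pi.single r (w 2)
  have hsum (f : ι → ℝ) : ∑ i, v i * f i = w 0 * f p + w 1 * f q + w 2 * f r := by
    simp [v, add_mul, Finset.sum_add_distrib, Pi.single_apply, ite_mul]
  refine ⟨v, ?_, ?_, ?_⟩
  · simpa [v, Finset.sum_add_distrib, Matrix.vecMul, dotProduct, Fin.sum_univ_three]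
      using congrFun hw 0
  · simpa [hsum, Matrix.vecMul, dotProduct, Fin.sum_univ_three] using congrFun hw 1
  · simpa [hsum, Matrix.vecMul, dotProduct, Fin.sum_univ_three] using congrFun hw 2

theorem hasDerivAt_sum_mul_exp_zpow {ι : Type*} [Fintype ι] {y : ι → ℝ} (hy : ∀ i, y i ≠ 0)
    (v : ι → ℝ) (k : ℤ) :
    HasDerivAt (fun s => ∑ i, (y i * exp (v i * s)) ^ k) (k * ∑ i, v i * y i ^ k) 0 := by
  have hterm : ∀ i ∈ Finset.univ, HasDerivAt (fun s => (y i * exp (v i * s)) ^ k)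
      (k * (v i * y i ^ k)) 0 := by
    intro i _
    have h := (hasDerivAt_zpow k _ (Or.inl (by simpa using hy i))).comp 0
      (((hasDerivAt_id (0 : ℝ)).const_mul (v i)).exp.const_mul (y i))
    refine h.congr_deriv ?_
    simp only [mul_zero, exp_zero, mul_one, id]
    have hyi := hy i
    rw [zpow_sub_one₀ hyi]
    field_simp
  rw [Finset.mul_sum]
  exact HasDerivAt.fun_sum hterm

theorem HasDerivAt.eventually_nhdsGT_lt {f : ℝ → ℝ} {f' x : ℝ} (hf : HasDerivAt f f' x)
    (hf' : 0 < f') : ∀ᶠ y in 𝓝[>] x, f x < f y := by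
  have hslope := (hasDerivAt_iff_tendsto_slope.1 hf).mono_left (nhdsGT_le_nhdsNE x)
  filter_upwards [hslope.eventually (eventually_gt_nhds hf'), self_mem_nhdsWithin] with y hy hxy
  exact (slope_pos_iff hxy).1 hy

theorem prod_mul_exp_of_sum_eq_zero {ι : Type*} [Fintype ι] (y v : ι → ℝ) (hv : ∑ i, v i = 0)
    (s : ℝ) : ∏ i, y i * exp (v i * s) = ∏ i, y i := by
  rw [Finset.prod_mul_distrib, ← exp_sum, ← Finset.sum_mul, hv, zero_mul, exp_zero, mul_one]

theorem stmt_12_general (n : ℕ) (T N : ℝ) (m : ℤ) (hm : m ≠ 0) (hm2 : m ≠ 2)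
    (y : Fin n → ℝ)
    (hyC : (∑ i, y i ^ 2 ≤ T) ∧ (∏ i, y i = N) ∧ ∀ i, 0 < y i)
    (hmax : ∀ x : Fin n → ℝ,
      (∑ i, x i ^ 2 ≤ T) → (∏ i, x i = N) → (∀ i, 0 < x i) →
      (∑ i, x i ^ m) ≤ ∑ i, y i ^ m) :
    Set.ncard (Set.range y) ≤ 2 := by
  obtain ⟨hsq, hprod, hpos⟩ := hyC
  by_contra! hcard
  obtain ⟨_, ⟨p, rfl⟩, _, ⟨q, rfl⟩, _, ⟨r, rfl⟩, hpq, hqr⟩ :=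
    Set.exists_lt_lt_of_two_lt_ncard (Set.finite_range y) hcard
  obtain ⟨v, hv, hv2, hvm⟩ := exists_sum_eq_of_lt hm hm2 (hpos p) hpq hqr 0 (-1) m
  have hy : ∀ i, y i ≠ 0 := fun i => (hpos i).ne'
  have hsq_decr := (hasDerivAt_sum_mul_exp_zpow hy v 2).neg.eventually_nhdsGT_lt
    (by simp [zpow_ofNat, hv2])
  have hpow_incr := (hasDerivAt_sum_mul_exp_zpow hy v m).eventually_nhdsGT_lt
    (by simpa [hvm] using mul_self_pos.2 (Int.cast_ne_zero.2 hm : (m : ℝ) ≠ 0))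
  obtain ⟨s, hs2, hsm⟩ := (hsq_decr.and hpow_incr).exists
  simp only [Pi.neg_apply, neg_lt_neg_iff, mul_zero, exp_zero, mul_one, zpow_ofNat] at hs2 hsm
  have hle := hmax (fun i => y i * exp (v i * s)) (by linarith)
    (by rw [prod_mul_exp_of_sum_eq_zero y v hv, hprod]) fun i => by have := hpos i; positivity
  linarith

theorem stmt_12 (n : ℕ) (hn : 1 ≤ n) (T N : ℝ) (hT : 0 < T) (hN : 0 < N)
    (hNT : N ≤ (T / n) ^ ((n : ℝ) / 2)) (m : ℤ) (hm : m ≠ 0) (hm2 : m ≠ 2)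
    (y : Fin n → ℝ)
    (hyC : (∑ i, y i ^ 2 ≤ T) ∧ (∏ i, y i = N) ∧ ∀ i, 0 < y i)
    (hmax : ∀ x : Fin n → ℝ,
      (∑ i, x i ^ 2 ≤ T) → (∏ i, x i = N) → (∀ i, 0 < x i) →
      (∑ i, x i ^ m) ≤ ∑ i, y i ^ m) :
    Set.ncard (Set.range y) ≤ 2 :=
  stmt_12_general n T N m hm hm2 y hyC hmax
end
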